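/- arXiv:0908.2319 — 2 statements merged into one kernel-verified Lean document; each statement's English description precedes it below -/
import Mathlib

section
/- Let m ≥ 2 and suppose the open interval (2p_m, 2p_{m+1}) contains at least one prime. Then the largest prime in this interval is not an RPR-prime, while every other prime in this interval is an RPR-prime. In particular, each interval (2p_m, 2p_{m+1}) contains exactly one prime that is not an RPR-prime, provided it contains a prime at all. -/
/-- `nthPrime n` is the n-th prime with 1-based indexing: p_1 = 2, p_2 = 3, ... -/
noncomputable def nthPrime (n : ℕ) : ℕ := Nat.nth Nat.Prime (n - 1)

/-- An RPR-prime: either 2, or an odd prime p = p_n satisfying Condition 1, i.e.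
every integer k with (p+1)/2 ≤ k ≤ (p_{n+1}-1)/2 is composite. -/
def IsRPR (p : ℕ) : Prop :=
  p = 2 ∨ (p.Prime ∧ Odd p ∧ ∀ n : ℕ, p = nthPrime n →
    ∀ k : ℕ, (p + 1) / 2 ≤ k → k ≤ (nthPrime (n + 1) - 1) / 2 → ¬ k.Prime)

/-!
Let `P < P'` be consecutive primes, `q` a prime in `(2P, 2P')` and `q'` the prime after `q`.
Since `(q + 1) / 2 > P`, the only prime that can lie in `[(q + 1) / 2, (q' - 1) / 2]` is `P'`,
and it lies there exactly when `q' > 2P'`. So `q` is an RPR-prime iff `q' < 2P'`, i.e. iff `q` is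
not the largest prime below `2P'`.
-/

open Nat

-- For non-prime `p` this is the second prime above `p`.
noncomputable def nextPrime (p : ℕ) : ℕ := nth Nat.Prime (count Nat.Prime p + 1)

lemma nextPrime_prime (p : ℕ) : (nextPrime p).Prime :=
  nth_mem_of_infinite infinite_setOfPred_prime _

lemma lt_nextPrime {p : ℕ} (hp : p.Prime) : p < nextPrime p := by
  conv_lhs => rw [← nth_count hp]
  exact (nth_lt_nth infinite_setOfPred_prime).2 (lt_add_one _)

lemma nextPrime_le {p r : ℕ} (hp : p.Prime) (hr : r.Prime) (hpr : p < r) : nextPrime p ≤ r := by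
  by_contra! hlt
  have := le_nth_of_lt_nth_succ hlt hr
  rw [nth_count hp] at this
  omega

lemma exists_prime_lt_iff_nextPrime_lt {p N : ℕ} (hp : p.Prime) :
    (∃ r, r.Prime ∧ p < r ∧ r < N) ↔ nextPrime p < N :=
  ⟨fun ⟨_, hr, hpr, hrN⟩ => (nextPrime_le hp hr hpr).trans_lt hrN,
    fun h => ⟨_, nextPrime_prime p, lt_nextPrime hp, h⟩⟩

lemma nthPrime_prime (n : ℕ) : (nthPrime n).Prime :=
  nth_mem_of_infinite infinite_setOfPred_prime _

lemma not_prime_of_nthPrime_lt_of_lt_nthPrime_succ (n : ℕ) {k : ℕ} (h₁ : nthPrime n < k)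
    (h₂ : k < nthPrime (n + 1)) : ¬ k.Prime := by
  intro hk
  obtain _ | n := n
  · exact absurd h₂ h₁.not_gt
  · have := le_nth_of_lt_nth_succ h₂ hk
    simp only [nthPrime, add_tsub_cancel_right] at h₁ this
    omega

-- `nthPrime 0 = nthPrime 1 = 2`, so an odd prime has exactly one index.
lemma eq_nthPrime_iff {p n : ℕ} (hp : p.Prime) (hp₂ : p ≠ 2) :
    p = nthPrime n ↔ n = count Nat.Prime p + 1 := by
  obtain _ | n := n
  · simp only [nthPrime, zero_tsub, nth_prime_zero_eq_two, hp₂, false_iff]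
    omega
  · rw [nthPrime, add_tsub_cancel_right, ← nth_count hp,
      (nth_injective infinite_setOfPred_prime).eq_iff, count_nth_of_infinite infinite_setOfPred_prime]
    omega

lemma isRPR_iff {p : ℕ} (hp : p.Prime) (hp₂ : p ≠ 2) :
    IsRPR p ↔ ∀ k, (p + 1) / 2 ≤ k → k ≤ (nextPrime p - 1) / 2 → ¬ k.Prime := by
  simp only [IsRPR, eq_nthPrime_iff hp hp₂, forall_eq, hp₂, hp, hp.odd_of_ne_two hp₂, true_and,
    false_or]
  rfl

lemma forall_not_prime_between_halves_iff {P P' q r : ℕ} (hP' : P'.Prime)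
    (hgap : ∀ k, P < k → k < P' → ¬ k.Prime) (hq₁ : 2 * P < q) (hq₂ : q < 2 * P')
    (hr : r.Prime) :
    (∀ k, (q + 1) / 2 ≤ k → k ≤ (r - 1) / 2 → ¬ k.Prime) ↔ r < 2 * P' := by
  refine ⟨fun h => ?_, fun h k hk₁ hk₂ => hgap k (by omega) (by omega)⟩
  have hr_ne : r ≠ 2 * P' := by
    rintro rfl
    exact not_prime_mul (by norm_num) hP'.ne_one hr
  by_contra! hle
  exact h P' (by omega) (by omega) hP'

theorem nonRPR_iff_largest_in_interval_general (m : ℕ) :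
    ∀ q : ℕ, q.Prime → 2 * nthPrime m < q → q < 2 * nthPrime (m + 1) →
      (IsRPR q ↔ ∃ r : ℕ, r.Prime ∧ q < r ∧ r < 2 * nthPrime (m + 1)) := by
  intro q hq hq₁ hq₂
  have hq_ne_two : q ≠ 2 := by
    have := (nthPrime_prime m).two_le
    omega
  rw [isRPR_iff hq hq_ne_two, exists_prime_lt_iff_nextPrime_lt hq]
  exact forall_not_prime_between_halves_iff (nthPrime_prime (m + 1))
    (fun _ => not_prime_of_nthPrime_lt_of_lt_nthPrime_succ m) hq₁ hq₂ (nextPrime_prime q)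

/-- Let m ≥ 2 and suppose the open interval (2p_m, 2p_{m+1}) contains a prime.
Then a prime q in this interval is an RPR-prime if and only if it is not the
largest prime in the interval (i.e. iff some larger prime lies in the interval).
In particular, the largest prime in the interval is not an RPR-prime, every other
prime in the interval is an RPR-prime, and the interval contains exactly one
non-RPR prime. -/
theorem nonRPR_iff_largest_in_interval (m : ℕ) (hm : 2 ≤ m)
    (hex : ∃ q : ℕ, q.Prime ∧ 2 * nthPrime m < q ∧ q < 2 * nthPrime (m + 1)) :
    ∀ q : ℕ, q.Prime → 2 * nthPrime m < q → q < 2 * nthPrime (m + 1) →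
      (IsRPR q ↔ ∃ r : ℕ, r.Prime ∧ q < r ∧ r < 2 * nthPrime (m + 1)) :=
  nonRPR_iff_largest_in_interval_general m
end

section
/- Assume that R_n / p_{2n} → 1 as n → ∞. Let π_R(n) denote the number of Ramanujan primes not exceeding n and π(n) the number of primes not exceeding n. Then π_R(n)/π(n) → 1/2 as n → ∞. -/
/-- The n-th Ramanujan prime: the smallest positive integer R such that for all
integers x ≥ R one has π(x) − π(⌊x/2⌋) ≥ n. -/
noncomputable def ramanujan (n : ℕ) : ℕ :=
  sInf {R : ℕ | 0 < R ∧ ∀ x : ℕ, R ≤ x →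
    n ≤ Nat.primeCounting x - Nat.primeCounting (x / 2)}

/-- A Ramanujan prime is a number of the form R_n for some n ≥ 1. -/
def IsRamanujanPrime (p : ℕ) : Prop := ∃ n : ℕ, 1 ≤ n ∧ p = ramanujan n

/-- π_R(x): the number of Ramanujan primes not exceeding x. -/
noncomputable def countRam (x : ℕ) : ℕ :=
  letI := Classical.decPred IsRamanujanPrime
  ((Finset.range (x + 1)).filter IsRamanujanPrime).card

/-! Write `m = π_R(x)`. Ramanujan primes increase strictly, so `R_m ≤ x < R_{m+1}`, and
`π(p_{2m}) = 2m`. It therefore suffices to know that `π` preserves asymptotic equivalence of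
sequences tending to infinity: then `R_m ~ p_{2m}` gives `π(R_m) ~ 2m ~ π(R_{m+1})`, and squeezing
yields `π(x) ~ 2m`.

That transfer property is a short-interval estimate. The primes in `(a, b]`, `a ≤ b ≤ 2a`, all
divide `C(b, b - a)`, so `(π(b) - π(a)) log a ≤ log C(b, b - a) ≤ 2 √(e b (b - a))`. For
`b ≤ (1 + ε) a` this is `O(√ε · a)`, small against Chebyshev's `π(a) log a ≥ a log 2 / 2`. -/

open Filter Finset Asymptotics Real
open scoped Nat Nat.Prime Topology

theorem pow_primeCounting_sub_le_choose {a b : ℕ} (hab : a ≤ b) (hb : b ≤ 2 * a) :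
    a ^ (π b - π a) ≤ b.choose (b - a) := by
  set s := Nat.primesLE b \ Nat.primesLE a
  have hcard : #s = π b - π a := by
    rw [card_sdiff_of_subset (Nat.primesLE_mono hab), Nat.primesLE_card_eq_primeCounting,
      Nat.primesLE_card_eq_primeCounting]
  have hmem : ∀ p ∈ s, p.Prime ∧ a < p ∧ b - a < p ∧ p ≤ b := fun p hp => by
    simp only [s, Finset.mem_sdiff, Nat.mem_primesLE, not_and] at hp
    obtain ⟨⟨hpb, hp⟩, hpa⟩ := hp
    have : a < p := by by_contra; exact hpa (by omega) hp
    exact ⟨hp, this, by omega, hpb⟩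
  rw [← hcard, Nat.choose_symm hab]
  calc a ^ #s ≤ ∏ p ∈ s, p := pow_card_le_prod s id a fun p hp => (hmem p hp).2.1.le
    _ ≤ b.choose a := Nat.le_of_dvd (Nat.choose_pos hab) <|
        prod_primes_dvd _ (fun p hp => (hmem p hp).1.prime) fun p hp =>
          have ⟨hp, hap, hbap, hpb⟩ := hmem p hp
          hp.dvd_choose hap hbap hpb

theorem log_le_two_mul_sqrt {x : ℝ} (hx : 0 ≤ x) : log x ≤ 2 * √x :=
  calc log x ≤ x ^ (1 / 2 : ℝ) / (1 / 2) := log_le_rpow_div hx (by norm_num)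
    _ = 2 * √x := by rw [← sqrt_eq_rpow]; ring

theorem log_choose_le_two_mul_sqrt (n k : ℕ) : log (n.choose k) ≤ 2 * √(exp 1 * n * k) := by
  rcases (n.choose k).eq_zero_or_pos with h0 | hpos
  · rw [h0, Nat.cast_zero, log_zero]; positivity
  rcases k.eq_zero_or_pos with rfl | hk
  · simp
  have hk : (0 : ℝ) < k := by exact_mod_cast hk
  set y := exp 1 * n / k with hy
  have hchoose : (n.choose k : ℝ) ≤ y ^ k :=
    calc (n.choose k : ℝ) ≤ n ^ k / k ! := Nat.choose_le_pow_div k n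
      _ = (n / k) ^ k * (k ^ k / k !) := by rw [div_pow]; field_simp
      _ ≤ (n / k) ^ k * exp k := by gcongr; exact pow_div_factorial_le_exp _ hk.le k
      _ = y ^ k := by rw [← exp_one_pow, ← mul_pow]; ring
  calc log (n.choose k) ≤ k * log y := by
        rw [← log_pow]; exact log_le_log (by exact_mod_cast hpos) hchoose
    _ ≤ k * (2 * √y) := by gcongr; exact log_le_two_mul_sqrt (by positivity)
    _ = 2 * √(exp 1 * n * k) := by
        rw [show exp 1 * n * k = k ^ 2 * y by rw [hy]; field_simp, sqrt_mul (by positivity),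
          sqrt_sq hk.le]
        ring

theorem eventually_mul_log_two_le_primeCounting_mul_log :
    ∀ᶠ n : ℕ in atTop, n * log 2 / 2 ≤ π n * log n := by
  have hlog : ∀ᶠ n : ℕ in atTop, log (n + 1) ≤ log 2 / 4 * (n + 1) := by
    have := (isLittleO_log_id_atTop.comp_tendsto
      (tendsto_natCast_atTop_atTop.comp (tendsto_add_atTop_nat 1))).bound
      (show 0 < log 2 / 4 by positivity)
    filter_upwards [this] with n hn
    simpa [abs_of_nonneg (log_nonneg (by linarith : (1:ℝ) ≤ n + 1)),
      abs_of_nonneg (by positivity : (0:ℝ) ≤ n + 1)] using hn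
  filter_upwards [hlog, eventually_ge_atTop 2] with n hn h2
  have hn1 : (1 : ℝ) ≤ n := by exact_mod_cast (by omega : 1 ≤ n)
  have hpi := (div_le_iff₀ (log_pos (by exact_mod_cast h2))).1 (Chebyshev.pi_ge n)
  nlinarith [log_pos (by norm_num : (1:ℝ) < 2)]

theorem exists_pos_eventually_primeCounting_le {δ : ℝ} (hδ : 0 < δ) :
    ∃ ε > 0, ∀ᶠ a : ℕ in atTop, ∀ b : ℕ, (b : ℝ) ≤ (1 + ε) * a → (π b : ℝ) ≤ (1 + δ) * π a := by
  set c := δ * log 2 / 4 with hc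
  set ε := min 1 (c ^ 2 / (2 * exp 1))
  refine ⟨ε, by positivity, ?_⟩
  filter_upwards [eventually_mul_log_two_le_primeCounting_mul_log, eventually_ge_atTop 2]
    with a hcheb ha b hb
  rcases le_total b a with hba | hab
  · have : (π b : ℝ) ≤ π a := by exact_mod_cast Nat.monotone_primeCounting hba
    nlinarith [(π a).cast_nonneg (α := ℝ)]
  have hε : ε ≤ 1 := min_le_left _ _
  have hb2 : b ≤ 2 * a := by
    have : (b : ℝ) ≤ 2 * a := by nlinarith [(a.cast_nonneg : (0:ℝ) ≤ a)]
    exact_mod_cast this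
  have hgap : ((b - a : ℕ) : ℝ) ≤ c ^ 2 / (2 * exp 1) * a := by
    push_cast [hab]
    nlinarith [mul_le_mul_of_nonneg_right (min_le_right 1 (c ^ 2 / (2 * exp 1))) a.cast_nonneg]
  have hsqrt : √(exp 1 * b * (b - a : ℕ)) ≤ c * a := by
    rw [sqrt_le_left (by positivity)]
    calc exp 1 * b * (b - a : ℕ) ≤ exp 1 * (2 * a) * (c ^ 2 / (2 * exp 1) * a) := by
          gcongr; exact_mod_cast hb2
      _ = (c * a) ^ 2 := by field_simp
  have hloga : 0 < log a := log_pos (by exact_mod_cast ha)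
  have key : ((π b : ℝ) - π a) * log a ≤ δ * π a * log a :=
    calc ((π b : ℝ) - π a) * log a = log ((a : ℝ) ^ (π b - π a)) := by
          rw [log_pow, Nat.cast_sub (Nat.monotone_primeCounting hab)]
      _ ≤ log (b.choose (b - a)) := log_le_log (by positivity) <| by
          exact_mod_cast pow_primeCounting_sub_le_choose hab hb2
      _ ≤ 2 * √(exp 1 * b * (b - a : ℕ)) := log_choose_le_two_mul_sqrt _ _
      _ ≤ 2 * (c * a) := by gcongr
      _ = δ * (a * log 2 / 2) := by rw [hc]; ring
      _ ≤ δ * π a * log a := by rw [mul_assoc]; gcongr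
  linarith [le_of_mul_le_mul_right key hloga]

section Transfer

variable {ι : Type*} {l : Filter ι} {u v : ι → ℕ}

theorem eventually_primeCounting_le_one_add_mul
    (hu : Tendsto u l atTop) (huv : (fun i => (v i : ℝ)) ~[l] fun i => (u i : ℝ))
    {δ : ℝ} (hδ : 0 < δ) :
    ∀ᶠ i in l, (π (v i) : ℝ) ≤ (1 + δ) * π (u i) := by
  obtain ⟨ε, hε, hgap⟩ := exists_pos_eventually_primeCounting_le hδ
  filter_upwards [hu.eventually hgap, huv.isLittleO.bound hε] with i hi hvu
  refine hi _ ?_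
  simp only [Pi.sub_apply, Real.norm_eq_abs, Nat.abs_cast] at hvu
  linarith [le_abs_self ((v i : ℝ) - u i)]

theorem isEquivalent_primeCounting_comp
    (hu : Tendsto u l atTop) (huv : (fun i => (v i : ℝ)) ~[l] fun i => (u i : ℝ)) :
    (fun i => (π (v i) : ℝ)) ~[l] fun i => (π (u i) : ℝ) := by
  have hv : Tendsto v l atTop := tendsto_natCast_atTop_iff.1 <|
    huv.symm.tendsto_atTop (tendsto_natCast_atTop_iff.2 hu)
  refine IsLittleO.isEquivalent (isLittleO_iff.2 fun δ hδ => ?_)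
  filter_upwards [eventually_primeCounting_le_one_add_mul hu huv hδ,
    eventually_primeCounting_le_one_add_mul hv huv.symm hδ] with i hv_le hu_le
  rw [Pi.sub_apply, Real.norm_natCast, Real.norm_eq_abs, abs_sub_le_iff]
  refine ⟨by linarith, ?_⟩
  rcases le_total (π (v i) : ℝ) (π (u i)) with h | h <;>
    nlinarith [(π (v i)).cast_nonneg (α := ℝ)]

end Transfer

theorem isEquivalent_of_isEquivalent_of_le_of_le {α : Type*} {l : Filter α} {f g h k : α → ℝ}
    (hf : f ~[l] k) (hh : h ~[l] k) (hfg : ∀ᶠ x in l, f x ≤ g x) (hgh : ∀ᶠ x in l, g x ≤ h x) :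
    g ~[l] k := by
  refine IsLittleO.isEquivalent (isLittleO_iff.2 fun c hc => ?_)
  filter_upwards [hf.isLittleO.bound hc, hh.isLittleO.bound hc, hfg, hgh] with x hfx hhx hfgx hghx
  simp only [Pi.sub_apply, Real.norm_eq_abs] at hfx hhx ⊢
  exact abs_le.2 ⟨by linarith [neg_abs_le (f x - k x)], by linarith [le_abs_self (h x - k x)]⟩

def ramanujanSet (n : ℕ) : Set ℕ := {R | 0 < R ∧ ∀ x, R ≤ x → n ≤ π x - π (x / 2)}

theorem ramanujan_eq_sInf (n : ℕ) : ramanujan n = sInf (ramanujanSet n) := rfl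

theorem ramanujanSet_antitone : Antitone ramanujanSet :=
  fun _ _ hnm _ hR => ⟨hR.1, fun x hx => hnm.trans (hR.2 x hx)⟩

theorem ramanujan_mem_ramanujanSet {n : ℕ} (h : (ramanujanSet n).Nonempty) :
    ramanujan n ∈ ramanujanSet n :=
  Nat.sInf_mem h

-- An empty `ramanujanSet n` would make `ramanujan n = sInf ∅ = 0`.
theorem ramanujanSet_nonempty_of_frequently (h : ∃ᶠ n in atTop, ramanujan n ≠ 0) (n : ℕ) :
    (ramanujanSet n).Nonempty := by
  obtain ⟨m, hnm, hm⟩ := frequently_atTop.1 h n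
  refine (Set.nonempty_iff_ne_empty.2 fun he => hm ?_).mono (ramanujanSet_antitone hnm)
  rw [ramanujan_eq_sInf, he, Nat.sInf_empty]

theorem primeCounting_sub_primeCounting_half_succ_le (x : ℕ) :
    π (x + 1) - π ((x + 1) / 2) ≤ π x - π (x / 2) + 1 := by
  have h1 : π (x + 1) ≤ π x + 1 := by
    rw [Nat.primeCounting_eq_primeCounting'_succ, Nat.primeCounting', Nat.count_succ]
    exact Nat.add_le_add_left (by split <;> omega) _
  have h2 : π (x / 2) ≤ π ((x + 1) / 2) := Nat.monotone_primeCounting (by omega)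
  omega

theorem ramanujan_lt_ramanujan_succ {n : ℕ} (h : (ramanujanSet (n + 1)).Nonempty) :
    ramanujan n < ramanujan (n + 1) := by
  obtain ⟨hpos, hge⟩ := ramanujan_mem_ramanujanSet h
  have h2 : 2 ≤ ramanujan (n + 1) := by
    by_contra! h1
    simpa using hge 1 (by omega)
  -- `π x - π (x / 2)` grows by at most one per step, so `R_{n+1} - 1` already works for `n`.
  have hmem : ramanujan (n + 1) - 1 ∈ ramanujanSet n := by
    refine ⟨by omega, fun x hx => ?_⟩
    by_cases hx' : ramanujan (n + 1) ≤ x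
    · exact (Nat.le_succ n).trans (hge x hx')
    · have := hge (x + 1) (by omega)
      have := primeCounting_sub_primeCounting_half_succ_le x
      omega
  exact (Nat.sInf_le hmem).trans_lt (by omega)

theorem strictMono_ramanujan (h : ∀ n, (ramanujanSet n).Nonempty) : StrictMono ramanujan :=
  strictMono_nat_of_lt_succ fun n => ramanujan_lt_ramanujan_succ (h (n + 1))

theorem countRam_eq_of_ramanujan_le_of_lt (hR : StrictMono ramanujan) {m x : ℕ}
    (hm : ramanujan m ≤ x) (hx : x < ramanujan (m + 1)) : countRam x = m := by
  unfold countRam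
  let := Classical.decPred IsRamanujanPrime
  have : (range (x + 1)).filter IsRamanujanPrime = (Icc 1 m).image ramanujan := by
    ext p
    simp only [mem_filter, mem_range, mem_image, mem_Icc, IsRamanujanPrime]
    constructor
    · rintro ⟨hpx, n, hn, rfl⟩
      exact ⟨n, ⟨hn, Nat.lt_add_one_iff.1 (hR.lt_iff_lt.1 (by omega))⟩, rfl⟩
    · rintro ⟨n, ⟨hn, hnm⟩, rfl⟩
      exact ⟨by have := hR.monotone hnm; omega, n, hn, rfl⟩
  rw [this, card_image_of_injective _ hR.injective, Nat.card_Icc, Nat.add_sub_cancel]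

theorem exists_le_and_lt_succ_of_strictMono {f : ℕ → ℕ} (hf : StrictMono f) {x : ℕ}
    (hx : f 0 ≤ x) : ∃ m, f m ≤ x ∧ x < f (m + 1) := by
  have hex : ∃ k, x < f k := ⟨x + 1, hf.id_le (x + 1)⟩
  have hk : Nat.find hex ≠ 0 := fun h => by have := Nat.find_spec hex; rw [h] at this; omega
  refine ⟨Nat.find hex - 1, not_lt.1 (Nat.find_min hex (by omega)), ?_⟩
  rw [Nat.sub_add_cancel (Nat.one_le_iff_ne_zero.2 hk)]
  exact Nat.find_spec hex

theorem ramanujan_countRam_le_and_lt (hR : StrictMono ramanujan) {x : ℕ}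
    (hx : ramanujan 0 ≤ x) : ramanujan (countRam x) ≤ x ∧ x < ramanujan (countRam x + 1) := by
  obtain ⟨m, hm, hxm⟩ := exists_le_and_lt_succ_of_strictMono hR hx
  rw [countRam_eq_of_ramanujan_le_of_lt hR hm hxm]
  exact ⟨hm, hxm⟩

theorem tendsto_countRam (hR : StrictMono ramanujan) : Tendsto countRam atTop atTop := by
  refine tendsto_atTop.2 fun b => ?_
  filter_upwards [eventually_ge_atTop (ramanujan b)] with x hx
  have := (ramanujan_countRam_le_and_lt hR ((hR.monotone (Nat.zero_le b)).trans hx)).2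
  exact Nat.lt_succ_iff.1 (hR.lt_iff_lt.1 (hx.trans_lt this))

theorem primeCounting_nthPrime {n : ℕ} (hn : n ≠ 0) : π (nthPrime n) = n := by
  rw [nthPrime, Nat.primeCounting_eq_primeCounting'_succ, Nat.primeCounting', Nat.count_succ,
    ← Nat.primeCounting', Nat.primeCounting'_nth_eq, if_pos (Nat.prime_nth_prime _)]
  omega

theorem isEquivalent_primeCounting_ramanujan
    (hR : Tendsto (fun n : ℕ => (ramanujan n : ℝ) / (nthPrime (2 * n) : ℝ)) atTop (𝓝 1)) :
    (fun n => (π (ramanujan n) : ℝ)) ~[atTop] fun n => 2 * (n : ℝ) := by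
  have hp : Tendsto (fun n => nthPrime (2 * n)) atTop atTop :=
    tendsto_atTop_mono (fun n => by
      have := Nat.add_two_le_nth_prime (2 * n - 1)
      simp only [nthPrime, id]
      omega) tendsto_id
  refine (isEquivalent_primeCounting_comp hp
    (isEquivalent_of_tendsto_one (u := fun n => (ramanujan n : ℝ)) hR)).congr_right ?_
  filter_upwards [eventually_ge_atTop 1] with n hn
  rw [primeCounting_nthPrime (by omega)]
  push_cast; ring

theorem isEquivalent_primeCounting_ramanujan_succ
    (hR : Tendsto (fun n : ℕ => (ramanujan n : ℝ) / (nthPrime (2 * n) : ℝ)) atTop (𝓝 1)) :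
    (fun n => (π (ramanujan (n + 1)) : ℝ)) ~[atTop] fun n => 2 * (n : ℝ) := by
  have h := (isEquivalent_primeCounting_ramanujan hR).comp_tendsto (tendsto_add_atTop_nat 1)
  refine h.trans ?_
  have := (IsEquivalent.refl (u := fun n : ℕ => 2 * (n : ℝ))).add_const_of_norm_tendsto_atTop
    (c := 2) (tendsto_norm_atTop_atTop.comp (tendsto_natCast_atTop_atTop.const_mul_atTop two_pos))
  convert this using 2 with n
  simp only [Function.comp_apply, Nat.cast_add, Nat.cast_one]
  ring

/-- Assuming Sondow's asymptotic R_n ~ p_{2n}, one has π_R(n)/π(n) → 1/2. -/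
theorem countRam_div_primeCounting
    (hR : Filter.Tendsto (fun n : ℕ => (ramanujan n : ℝ) / (nthPrime (2 * n) : ℝ))
      Filter.atTop (nhds 1)) :
    Filter.Tendsto (fun n : ℕ => (countRam n : ℝ) / (Nat.primeCounting n : ℝ))
      Filter.atTop (nhds (1 / 2)) := by
  have hmono : StrictMono ramanujan :=
    strictMono_ramanujan <| ramanujanSet_nonempty_of_frequently <|
      (hR.eventually_ne one_ne_zero).frequently.mono fun n hn h0 => hn (by simp [h0])
  have hc := tendsto_countRam hmono
  have hbounds : ∀ᶠ x in atTop, ramanujan (countRam x) ≤ x ∧ x < ramanujan (countRam x + 1) :=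
    (eventually_ge_atTop _).mono fun x => ramanujan_countRam_le_and_lt hmono
  have hsq : (fun x => (π x : ℝ)) ~[atTop] fun x => 2 * (countRam x : ℝ) :=
    isEquivalent_of_isEquivalent_of_le_of_le
      ((isEquivalent_primeCounting_ramanujan hR).comp_tendsto hc)
      ((isEquivalent_primeCounting_ramanujan_succ hR).comp_tendsto hc)
      (hbounds.mono fun x hx => Nat.cast_le.2 (Nat.monotone_primeCounting hx.1))
      (hbounds.mono fun x hx => Nat.cast_le.2 (Nat.monotone_primeCounting hx.2.le))
  have hπ : ∀ᶠ x in atTop, (π x : ℝ) ≠ 0 :=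
    (Nat.tendsto_primeCounting.eventually_ne_atTop 0).mono fun x hx => Nat.cast_ne_zero.2 hx
  refine (((isEquivalent_iff_tendsto_one hπ).1 hsq.symm).div_const 2).congr fun x => ?_
  simp only [Pi.div_apply]
  ring
end
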